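/- Define the Brown–von Neumann–Nash (BNN) vector field on the product of simplices X = ∏_i Δ_{S_i} for a finite game with utility functions u_i, by, for each player i and strategy a ∈ S_i: β_i^a(x) = [u_i(a, x_{−i}) − ū_i(x)]₊ − x_i^a · Σ_{b∈S_i} [u_i(b, x_{−i}) − ū_i(x)]₊, where ū_i(x) = Σ_b x_i^b u_i(b, x_{−i}) and [t]₊ = max(t, 0). Then x ∈ X is a zero of β (i.e. β_i^a(x) = 0 for all i, a) if and only if x is a Nash equilibrium of the game. -/

import Mathlib

open Finset

/-- Expected value of a pure-profile payoff `U` under the (product of the) mixed profile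
`x`, i.e. `∑_s (∏_j x_j(s_j)) · U(s)`. -/
noncomputable def expPay {p : ℕ} {S : Fin p → Type*} [∀ i, Fintype (S i)]
    (U : (∀ i, S i) → ℝ) (x : ∀ i, S i → ℝ) : ℝ :=
  ∑ s : (∀ i, S i), (∏ j, x j (s j)) * U s

/-- `u_i(a, x_{−i})`: expected payoff to the pure-profile payoff `U` when player `i` plays
the pure strategy `a` and the others play according to `x`. -/
noncomputable def pureDevPay {p : ℕ} {S : Fin p → Type*} [∀ i, Fintype (S i)]
    [∀ i, DecidableEq (S i)] (U : (∀ i, S i) → ℝ) (x : ∀ i, S i → ℝ)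
    (i : Fin p) (a : S i) : ℝ :=
  expPay U (Function.update x i (fun b => if b = a then (1 : ℝ) else 0))

/-- The Brown–von Neumann–Nash vector field:
`β_i^a(x) = [u_i(a,x_{−i}) − ū_i(x)]₊ − x_i^a · Σ_b [u_i(b,x_{−i}) − ū_i(x)]₊`. -/
noncomputable def bnn {p : ℕ} {S : Fin p → Type*} [∀ i, Fintype (S i)]
    [∀ i, DecidableEq (S i)] (U : ∀ _ : Fin p, (∀ i, S i) → ℝ)
    (x : ∀ i, S i → ℝ) (i : Fin p) (a : S i) : ℝ :=
  max (pureDevPay (U i) x i a - expPay (U i) x) 0 -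
    x i a * ∑ b : S i, max (pureDevPay (U i) x i b - expPay (U i) x) 0

/- At a zero of the field, multiplying `β_i^a = 0` by the excess payoff `e_a` and summing over `a`
gives `∑ₐ (e_a)₊ e_a = (∑_b (e_b)₊) · ∑ₐ x_i^a e_a = 0`, because the `x_i`-average of the excess
payoffs vanishes. Each term `(e_a)₊ e_a = (e_a)₊²` is nonnegative, so every positive part is zero,
which is the Nash condition. Conversely, at a Nash equilibrium all positive parts vanish. -/

lemma prod_update_apply {ι : Type*} [Fintype ι] [DecidableEq ι] {S : ι → Type*}
    (x : ∀ i, S i → ℝ) (i : ι) (y : S i → ℝ) (s : ∀ i, S i) :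
    ∏ j, Function.update x i y j (s j) = y (s i) * ∏ j ∈ univ.erase i, x j (s j) := by
  rw [← mul_prod_erase univ _ (mem_univ i), Function.update_self]
  congr 1
  exact prod_congr rfl fun j hj => by rw [Function.update_of_ne (ne_of_mem_erase hj)]

lemma sum_mul_pureDevPay {p : ℕ} {S : Fin p → Type*} [∀ i, Fintype (S i)]
    [∀ i, DecidableEq (S i)] (U : (∀ i, S i) → ℝ) (x : ∀ i, S i → ℝ) (i : Fin p) :
    ∑ a, x i a * pureDevPay U x i a = expPay U x := by
  simp only [pureDevPay, expPay, prod_update_apply, mul_sum]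
  rw [sum_comm]
  refine sum_congr rfl fun s _ => ?_
  simp only [ite_mul, one_mul, zero_mul, mul_ite, mul_zero, sum_ite_eq, mem_univ, if_true]
  rw [← mul_prod_erase univ (fun j => x j (s j)) (mem_univ i)]
  ring

lemma sum_mul_sub_expPay_eq_zero {p : ℕ} {S : Fin p → Type*} [∀ i, Fintype (S i)]
    [∀ i, DecidableEq (S i)] (U : (∀ i, S i) → ℝ) (x : ∀ i, S i → ℝ) (i : Fin p)
    (hx : ∑ a, x i a = 1) :
    ∑ a, x i a * (pureDevPay U x i a - expPay U x) = 0 := by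
  simp only [mul_sub, sum_sub_distrib, sum_mul_pureDevPay, ← sum_mul, hx, one_mul, sub_self]

lemma max_zero_mul_self_nonneg (t : ℝ) : 0 ≤ max t 0 * t := by
  rcases le_total t 0 with ht | ht
  · simp [max_eq_right ht]
  · rw [max_eq_left ht]
    exact mul_self_nonneg t

lemma nonpos_of_max_zero_eq_mul_sum {ι : Type*} [Fintype ι] (w e : ι → ℝ)
    (hwe : ∑ a, w a * e a = 0) (h : ∀ a, max (e a) 0 = w a * ∑ b, max (e b) 0) (a : ι) :
    e a ≤ 0 := by
  have hsum : ∑ b, max (e b) 0 * e b = 0 := calc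
    ∑ b, max (e b) 0 * e b = (∑ b, w b * e b) * ∑ b, max (e b) 0 := by
      rw [sum_mul]
      exact sum_congr rfl fun b _ => by rw [h b]; ring
    _ = 0 := by rw [hwe, zero_mul]
  have ha : max (e a) 0 * e a = 0 :=
    (sum_eq_zero_iff_of_nonneg fun b _ => max_zero_mul_self_nonneg (e b)).1 hsum a (mem_univ a)
  by_contra! hpos
  rw [max_eq_left hpos.le] at ha
  exact (mul_self_pos.2 hpos.ne').ne' ha

theorem bnn_zero_iff_nash_general (p : ℕ) (S : Fin p → Type*) [∀ i, Fintype (S i)]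
    [∀ i, DecidableEq (S i)]
    (U : ∀ _ : Fin p, (∀ i, S i) → ℝ)
    (x : ∀ i, S i → ℝ) (hx : ∀ i, x i ∈ stdSimplex ℝ (S i)) :
    (∀ (i : Fin p) (a : S i), bnn U x i a = 0) ↔
    (∀ (i : Fin p) (a : S i), pureDevPay (U i) x i a ≤ expPay (U i) x) := by
  constructor
  · intro hzero i a
    have hexcess := nonpos_of_max_zero_eq_mul_sum (x i)
      (fun b => pureDevPay (U i) x i b - expPay (U i) x)
      (sum_mul_sub_expPay_eq_zero (U i) x i (hx i).2) (fun b => sub_eq_zero.1 (hzero i b)) a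
    exact sub_nonpos.1 hexcess
  · intro hnash i a
    simp [bnn, max_eq_right (sub_nonpos.2 (hnash i _))]

/-- **Zeros of the BNN field are exactly the Nash equilibria.** For a finite game with
pure payoffs `U i` and a mixed profile `x` (each `x i` in the simplex), the BNN field
vanishes at `x` if and only if `x` is a Nash equilibrium, i.e.
`u_i(a, x_{−i}) ≤ ū_i(x)` for every player `i` and strategy `a`. -/
theorem bnn_zero_iff_nash (p : ℕ) (S : Fin p → Type*) [∀ i, Fintype (S i)]
    [∀ i, DecidableEq (S i)] [∀ i, Nonempty (S i)]
    (U : ∀ _ : Fin p, (∀ i, S i) → ℝ)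
    (x : ∀ i, S i → ℝ) (hx : ∀ i, x i ∈ stdSimplex ℝ (S i)) :
    (∀ (i : Fin p) (a : S i), bnn U x i a = 0) ↔
    (∀ (i : Fin p) (a : S i), pureDevPay (U i) x i a ≤ expPay (U i) x) :=
  bnn_zero_iff_nash_general p S U x hx
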